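/- arXiv:1003.3406 — 6 statements merged into one kernel-verified Lean document; each statement's English description precedes it below -/
import Mathlib

section
/- Let s, t be positive integers with 2s ≤ t. Then for every integer m with s ≤ m ≤ T_t - T_s, there exists a subset S of the integer range [s, t] whose elements sum to m, where T_x = x(x+1)/2. -/
/-- minimal sum of `k` distinct integers `≥ a`: `a + (a+1) + ⋯ + (a+k-1)` -/
def minsum : ℕ → ℕ → ℕ
  | 0, _ => 0
  | k+1, a => minsum k a + (a + k)

/-- maximal sum of `k` distinct integers `≤ b`: `b + (b-1) + ⋯ + (b-k+1)` -/
def maxsum : ℕ → ℕ → ℕ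
  | 0, _ => 0
  | k+1, b => maxsum k b + (b - k)

lemma minsum_eq (k a : ℕ) : 2 * minsum k a + k = k * (2 * a + k) := by
  induction k with
  | zero => simp [minsum]
  | succ k ih =>
    have r1 : (k+1) * (2*a + (k+1)) = k * (2*a + k) + 2*a + 2*k + 1 := by ring
    simp only [minsum]
    omega

lemma maxsum_eq (k b : ℕ) (h : k ≤ b + 1) : 2 * maxsum k b + k * k = 2 * k * b + k := by
  induction k with
  | zero => simp [maxsum]
  | succ k ih =>
    have hkb : k ≤ b := by omega
    have ih' := ih (by omega)
    have r1 : 2*(k+1)*b = 2*k*b + 2*b := by ring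
    have r2 : (k+1)*(k+1) = k*k + 2*k + 1 := by ring
    simp only [maxsum]
    omega

lemma key (k : ℕ) : ∀ a b m : ℕ, 1 ≤ a → a + k ≤ b + 1 → minsum k a ≤ m → m ≤ maxsum k b →
    ∃ S : Finset ℕ, S ⊆ Finset.Icc a b ∧ S.sum id = m := by
  induction k with
  | zero =>
    intro a b m _ _ _ hmax
    have hm0 : m = 0 := by simpa [maxsum] using hmax
    exact ⟨∅, by simp, by simp [hm0]⟩
  | succ k ih =>
    intro a b m ha hab hmin hmax
    have hms : minsum (k+1) a = minsum k a + (a + k) := rfl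
    set x := min b (m - minsum k a) with hx
    have hax : a + k ≤ x := by omega
    have hxb : x ≤ b := by omega
    have hxm : x ≤ m := by omega
    -- prepare recursion on [a, x-1] with target m - x
    obtain ⟨y, hy⟩ : ∃ y, x = y + 1 := ⟨x - 1, by omega⟩
    have hmin' : minsum k a ≤ m - x := by omega
    have hmax' : m - x ≤ maxsum k y := by
      have hky : k ≤ y + 1 := by omega
      have e2 : 2 * maxsum k y + k * k = 2 * k * y + k := maxsum_eq k y hky
      rcases le_or_gt b (m - minsum k a) with hbm | hbm
      · -- x = b = y + 1
        have hxb' : x = b := by omega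
        have e1 : 2 * maxsum (k+1) b + (k+1)*(k+1) = 2*(k+1)*b + (k+1) :=
          maxsum_eq (k+1) b (by omega)
        have r1 : 2*(k+1)*(y+1) = 2*(k*y) + 2*k + 2*y + 2 := by ring
        have r2 : (k+1)*(k+1) = k*k + 2*k + 1 := by ring
        have r3 : 2*k*y = 2*(k*y) := by ring
        rw [hxb'] at hy
        subst hy
        omega
      · -- x = m - minsum k a, so m - x = minsum k a; show minsum k a ≤ maxsum k y
        have hxe : x = m - minsum k a := by omega
        have e3 : 2 * minsum k a + k = k * (2*a + k) := minsum_eq k a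
        have hq : k*(a+k) ≤ k*(y+1) := Nat.mul_le_mul_left k (by omega)
        have r1 : k*(2*a+k) = 2*(k*a) + k*k := by ring
        have r2 : k*(a+k) = k*a + k*k := by ring
        have r3 : k*(y+1) = k*y + k := by ring
        have r4 : 2*k*y = 2*(k*y) := by ring
        omega
    obtain ⟨S', hS'sub, hS'sum⟩ := ih a y (m - x) ha (by omega) hmin' hmax'
    have hxS' : x ∉ S' := by
      intro hmem
      have := hS'sub hmem
      rw [Finset.mem_Icc] at this
      omega
    refine ⟨insert x S', ?_, ?_⟩
    · intro z hz
      rcases Finset.mem_insert.mp hz with rfl | hz'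
      · rw [Finset.mem_Icc]; omega
      · have := hS'sub hz'
        rw [Finset.mem_Icc] at this ⊢
        omega
    · rw [Finset.sum_insert hxS', hS'sum]
      simp only [id]
      omega

theorem subset_sum_range_big (s t : ℕ) (hs : 0 < s) (ht : 0 < t) (h : 2 * s ≤ t)
    (m : ℕ) (hm₁ : s ≤ m) (hm₂ : m ≤ t * (t + 1) / 2 - s * (s + 1) / 2) :
    ∃ S : Finset ℕ, S ⊆ Finset.Icc s t ∧ S.sum id = m := by
  obtain ⟨d, rfl⟩ : ∃ d, t = s + d := ⟨t - s, by omega⟩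
  have hd : s ≤ d := by omega
  -- rewrite upper bound as maxsum d (s+d)
  have hmax_d : m ≤ maxsum d (s + d) := by
    have e1 : 2 * maxsum d (s+d) + d*d = 2*d*(s+d) + d := maxsum_eq d (s+d) (by omega)
    obtain ⟨r1, hr1⟩ := Nat.even_mul_succ_self (s+d)
    obtain ⟨r2, hr2⟩ := Nat.even_mul_succ_self s
    have h2 : 2 * ((s+d)*(s+d+1)/2) = (s+d)*(s+d+1) := by omega
    have h3 : 2 * (s*(s+1)/2) = s*(s+1) := by omega
    have h4 : (s+d)*(s+d+1) + d*d = s*(s+1) + 2*d*(s+d) + d := by ring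
    omega
  have hex : ∃ k, m ≤ maxsum k (s + d) := ⟨d, hmax_d⟩
  have hk : m ≤ maxsum (Nat.find hex) (s + d) := Nat.find_spec hex
  have hkd : Nat.find hex ≤ d := Nat.find_le hmax_d
  have hk1 : 1 ≤ Nat.find hex := by
    rcases Nat.eq_zero_or_pos (Nat.find hex) with h0 | h1
    · exfalso; rw [h0] at hk; simp [maxsum] at hk; omega
    · exact h1
  obtain ⟨j, hkj⟩ : ∃ j, Nat.find hex = j + 1 := ⟨Nat.find hex - 1, by omega⟩
  rw [hkj] at hk hkd
  have hminle : minsum (j + 1) s ≤ m := by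
    rcases Nat.eq_zero_or_pos j with rfl | hj1
    · simp [minsum]; omega
    · have hjlt : ¬ m ≤ maxsum j (s + d) := Nat.find_min hex (by omega)
      have f1 : 2 * minsum (j+1) s + (j+1) = (j+1) * (2*s + (j+1)) := minsum_eq (j+1) s
      have f2 : 2 * maxsum j (s+d) + j*j = 2*j*(s+d) + j := maxsum_eq j (s+d) (by omega)
      have r1 : (j+1)*(2*s+(j+1)) = 2*(j*s) + j*j + 2*s + 2*j + 1 := by ring
      have r2 : 2*j*(s+d) = 2*(j*s) + 2*(j*d) := by ring
      have hcore : j*j + s ≤ j*d + 1 := by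
        rcases le_or_gt s j with hsj | hjs
        · have q1 : j*(j+1) ≤ j*d := Nat.mul_le_mul_left j (by omega)
          have q2 : j*(j+1) = j*j + j := by ring
          omega
        · obtain ⟨u, rfl⟩ : ∃ u, j = u + 1 := ⟨j - 1, by omega⟩
          obtain ⟨v, rfl⟩ : ∃ v, s = u + 2 + v := ⟨s - u - 2, by omega⟩
          have q1 : (u+1)*(u+2+v) ≤ (u+1)*d := Nat.mul_le_mul_left _ (by omega)
          have q2 : (u+1)*(u+2+v) = u*u + u*v + 3*u + v + 2 := by ring
          have q3 : (u+1)*(u+1) = u*u + 2*u + 1 := by ring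
          omega
      omega
  exact key (j + 1) s (s + d) m hs (by omega) hminle hk
end

section
/- Let s, t be positive integers with 2t ≥ 3s + 3. Then for every integer m with 2s + 1 ≤ m ≤ T_t - T_{s+1}, there exists a subset S of the integer range [s, t] whose elements sum to m, where T_x = x(x+1)/2. -/
lemma exists_subset_sum_aux : ∀ (k s u n : ℕ), 1 ≤ k →
    2*k*s + k*(k-1) ≤ 2*n → 2*n + k*(k-1) ≤ 2*k*u →
    ∃ S : Finset ℕ, S ⊆ Finset.Icc s u ∧ S.sum id = n := by
  intro k
  induction k with
  | zero => intro s u n h; exact absurd h (by omega)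
  | succ k ih =>
    intro s u n _ H1 H2
    rcases Nat.eq_zero_or_pos k with rfl | hk
    · refine ⟨{n}, ?_, by simp⟩
      simp only [Finset.singleton_subset_iff, Finset.mem_Icc]
      omega
    · have H1' : 2*(k+1)*s + (k+1)*k ≤ 2*n := by simpa using H1
      have H2' : 2*n + (k+1)*k ≤ 2*(k+1)*u := by simpa using H2
      have hkk : (k+1)*k = k*(k-1) + 2*k := by
        cases k with
        | zero => omega
        | succ m => simp only [Nat.add_sub_cancel]; ring
      have hceq : k*(k-1) = (k-1)*((k-1)+1) := by
        rw [Nat.sub_add_cancel hk]; ring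
      have hce : Even (k*(k-1)) := by rw [hceq]; exact Nat.even_mul_succ_self _
      have hc2 : 2 * (k*(k-1) / 2) = k*(k-1) := Nat.two_mul_div_two_of_even hce
      set P := k*s + k*(k-1)/2 with hPdef
      have hP2 : 2*P = 2*(k*s) + k*(k-1) := by
        rw [hPdef, Nat.mul_add, hc2]
      -- u is big enough
      have ha : s + k ≤ u := by
        by_contra hcon
        push_neg at hcon
        have hu : (u:ℤ) + 1 ≤ (s:ℤ) + k := by exact_mod_cast hcon
        have h1 : (2*(k+1)*s + (k+1)*k : ℤ) ≤ 2*(n:ℤ) := by exact_mod_cast H1'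
        have h2 : (2*(n:ℤ) + (k+1)*k) ≤ 2*(k+1)*u := by exact_mod_cast H2'
        have h3 : (2*(k+1):ℤ) * u ≤ 2*(k+1) * ((s:ℤ)+k-1) :=
          mul_le_mul_of_nonneg_left (by linarith : (u:ℤ) ≤ (s:ℤ)+k-1) (by positivity)
        nlinarith [h3, h1, h2]
      have hnP : P + (s + k) ≤ n := by
        have h2 : 2*(P + (s+k)) ≤ 2*n := by linarith [hP2, H1', hkk]
        omega
      obtain ⟨x, hxu, hxnP, hxor⟩ : ∃ x, x ≤ u ∧ x ≤ n - P ∧ (x = u ∨ x = n - P) :=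
        ⟨min u (n-P), min_le_left _ _, min_le_right _ _, by
          rcases min_cases u (n-P) with ⟨h1,_⟩|⟨h1,_⟩
          · exact Or.inl h1
          · exact Or.inr h1⟩
      have hxge : s + k ≤ x := by rcases hxor with rfl | rfl
                                  · exact ha
                                  · omega
      have hxn : x ≤ n := le_trans hxnP (Nat.sub_le _ _)
      have hPx : P ≤ n - x := by omega
      have hyp1 : 2*k*s + k*(k-1) ≤ 2*(n - x) := by
        have h2P : 2*P ≤ 2*(n-x) := by omega
        linarith [hP2]
      have hyp2 : 2*(n - x) + k*(k-1) ≤ 2*k*(x-1) := by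
        have hx1 : 1 ≤ x := by omega
        have hexp : k*(x-1) + k = k*x := by
          cases x with
          | zero => omega
          | succ m => simp only [Nat.add_sub_cancel]; ring
        rcases hxor with hxe | hxe
        · -- x = u
          have H2x : 2*n + (k+1)*k ≤ 2*(k+1)*x := hxe ▸ H2'
          zify [hxn, hx1]
          have h2 : (2*(n:ℤ) + ((k:ℤ)+1)*k) ≤ 2*((k:ℤ)+1)*x := by exact_mod_cast H2x
          have hkkz : ((k:ℤ)+1)*(k:ℤ) = ((k*(k-1):ℕ):ℤ) + 2*(k:ℤ) := by exact_mod_cast hkk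
          push_cast at hkkz ⊢
          linarith [h2, hkkz]
        · -- x = n - P
          have hsub : n - x = P := by omega
          rw [hsub]
          have hky : k*(s+k) ≤ k*x := Nat.mul_le_mul_left _ hxge
          have hksk : k*(s+k) = k*s + k*(k-1) + k := by
            cases k with
            | zero => omega
            | succ m => simp only [Nat.add_sub_cancel]; ring
          linarith [hky, hksk, hexp, hP2]
      obtain ⟨S, hSsub, hSsum⟩ := ih s (x-1) (n-x) hk hyp1 hyp2
      have hxS : x ∉ S := by
        intro hmem
        have := hSsub hmem
        simp only [Finset.mem_Icc] at this
        omega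
      refine ⟨insert x S, ?_, ?_⟩
      · rw [Finset.insert_subset_iff]
        refine ⟨Finset.mem_Icc.mpr ⟨by omega, hxu⟩, hSsub.trans (Finset.Icc_subset_Icc_right (by omega))⟩
      · rw [Finset.sum_insert hxS, hSsum]
        simp only [id]
        omega

set_option maxHeartbeats 1000000 in
theorem subset_sum_range_small (s t : ℕ) (hs : 0 < s) (ht : 0 < t) (h : 2 * t ≥ 3 * s + 3)
    (m : ℕ) (hm₁ : 2 * s + 1 ≤ m) (hm₂ : m ≤ t * (t + 1) / 2 - (s + 1) * (s + 2) / 2) :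
    ∃ S : Finset ℕ, S ⊆ Finset.Icc s t ∧ S.sum id = m := by
  have hst2 : s + 2 ≤ t := by omega
  have hA2 : t*(t+1)/2 * 2 = t*(t+1) := Nat.div_mul_cancel (Nat.even_mul_succ_self t).two_dvd
  have hB2 : (s+1)*(s+2)/2 * 2 = (s+1)*(s+2) := Nat.div_mul_cancel (Nat.even_mul_succ_self (s+1)).two_dvd
  have hBA : (s+1)*(s+2)/2 ≤ t*(t+1)/2 :=
    Nat.div_le_div_right (Nat.mul_le_mul (by omega) (by omega))
  have hm2' : 2*m + (s+1)*(s+2) ≤ t*(t+1) := by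
    have hadd : m + (s+1)*(s+2)/2 ≤ t*(t+1)/2 := (Nat.le_sub_iff_add_le hBA).mp hm₂
    linarith [hA2, hB2, hadd]
  have hexists : ∃ k, 2*m + k*(k-1) ≤ 2*k*t := by
    refine ⟨t+1, ?_⟩
    show 2*m + (t+1)*t ≤ 2*(t+1)*t
    nlinarith [hm2']
  obtain ⟨k, hPk, hkt1, hkmin⟩ :
      ∃ k, (2*m + k*(k-1) ≤ 2*k*t) ∧ k ≤ t+1 ∧ ∀ j, j < k → ¬(2*m + j*(j-1) ≤ 2*j*t) :=
    ⟨Nat.find hexists, Nat.find_spec hexists,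
      Nat.find_le (by show 2*m + (t+1)*t ≤ 2*(t+1)*t; nlinarith [hm2']),
      fun j hj => Nat.find_min hexists hj⟩
  have hk1 : 1 ≤ k := by
    rcases Nat.eq_zero_or_pos k with h0 | h0
    · exfalso; rw [h0] at hPk; omega
    · exact h0
  have hlow : 2*k*s + k*(k-1) ≤ 2*m := by
    rcases Nat.lt_or_ge k 3 with hk3 | hk3
    · interval_cases k <;> omega
    · -- k ≥ 3
      set j := k - 1 with hjdef
      have hj2 : 2 ≤ j := by omega
      have hjk : j < k := by omega
      have hgt : 2*j*t < 2*m + j*(j-1) := by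
        have := hkmin j hjk; omega
      have hjt : j ≤ t := by omega
      have hjeven : Even (j*(j-1)) := by
        have : j*(j-1) = (j-1)*((j-1)+1) := by rw [Nat.sub_add_cancel (by omega : 1 ≤ j)]; ring
        rw [this]; exact Nat.even_mul_succ_self _
      have hge : 2*j*t + 2 ≤ 2*m + j*(j-1) := by
        obtain ⟨r, hr⟩ := hjeven
        rw [hr] at hgt ⊢
        have h2jt : ∃ a, 2*j*t = 2*a := ⟨j*t, by ring⟩
        obtain ⟨a, ha⟩ := h2jt
        omega
      -- Step 1 : t ≥ s + j + 2
      have hts2 : s + j + 2 ≤ t := by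
        by_contra hcon
        push_neg at hcon
        apply hkmin j hjk
        have hj1 : (1:ℤ) ≤ j := by exact_mod_cast (by omega : (1:ℕ) ≤ j)
        have hm2z : 2*(m:ℤ) + ((s:ℤ)+1)*((s:ℤ)+2) ≤ (t:ℤ)*((t:ℤ)+1) := by exact_mod_cast hm2'
        have htle : (t:ℤ) ≤ (s:ℤ) + j + 1 := by exact_mod_cast (by omega : t ≤ s + j + 1)
        have hjtz : (j:ℤ) ≤ t := by exact_mod_cast hjt
        have hprod : (0:ℤ) ≤ ((j:ℤ) - ((t:ℤ) - s - 1)) * ((t:ℤ) + s + 2 - j) :=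
          mul_nonneg (by linarith) (by linarith)
        zify [show (1:ℕ) ≤ j by omega]
        linarith [hprod, hm2z]
      -- Step 2
      have hkeq : k = j + 1 := by omega
      rw [hkeq]
      show 2*(j+1)*s + (j+1)*j ≤ 2*m
      have key : 2*(j+1)*s + (j+1)*j + j*(j-1) ≤ 2*j*t + 2 := by
        have hj1 : (1:ℕ) ≤ j := by omega
        zify [hj1]
        have htz : (s:ℤ) + j + 2 ≤ t := by exact_mod_cast hts2
        have hhz : 3*(s:ℤ) + 3 ≤ 2*t := by exact_mod_cast h
        rcases Nat.lt_or_ge s (2*j+2) with hcase | hcase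
        · have hsz : (s:ℤ) ≤ 2*(j:ℤ) + 1 := by exact_mod_cast (by omega : s ≤ 2*j+1)
          have hp : (0:ℤ) ≤ 2*(j:ℤ) * ((t:ℤ) - (s + j + 2)) :=
            mul_nonneg (by positivity) (by linarith)
          linarith [hp]
        · have hsz : 2*(j:ℤ) + 2 ≤ s := by exact_mod_cast hcase
          have hjz : (2:ℤ) ≤ j := by exact_mod_cast hj2
          have hp1 : (0:ℤ) ≤ (j:ℤ) * (2*(t:ℤ) - (3*s+3)) :=
            mul_nonneg (by positivity) (by linarith)
          have hp2 : (0:ℤ) ≤ ((j:ℤ) - 2) * ((s:ℤ) - (2*j+1)) :=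
            mul_nonneg (by linarith) (by linarith)
          linarith [hp1, hp2]
      -- combine
      have hjj : (j+1)*j + j*(j-1) + 2*j = (j+1)*j + (j+1)*j := by
        have : j*(j-1) + j = j*j := by
          cases j with
          | zero => omega
          | succ m => simp only [Nat.add_sub_cancel]; ring
        linarith [this]
      linarith [key, hge]
  exact exists_subset_sum_aux k s t m hk1 hlow hPk
end

section
/- Let n ≥ 37 and a ≤ b ≤ c with T_a + T_b + T_c = n + T_n and c ≤ n - 4. Then T_b ≥ n + 2a + 3. -/
theorem Tb_large_of_c_small (n a b c : ℕ) (hn : 37 ≤ n) (hab : a ≤ b) (hbc : b ≤ c)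
    (h : a * (a + 1) / 2 + b * (b + 1) / 2 + c * (c + 1) / 2 = n + n * (n + 1) / 2)
    (hc : c ≤ n - 4) :
    b * (b + 1) / 2 ≥ n + 2 * a + 3 := by
  have ha2 : 2 ∣ a * (a + 1) := (Nat.even_mul_succ_self a).two_dvd
  have hb2 : 2 ∣ b * (b + 1) := (Nat.even_mul_succ_self b).two_dvd
  have hc2 : 2 ∣ c * (c + 1) := (Nat.even_mul_succ_self c).two_dvd
  have hn2 : 2 ∣ n * (n + 1) := (Nat.even_mul_succ_self n).two_dvd
  have hcn : c + 4 ≤ n := by omega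
  have hcb : c * (c + 1) ≤ (n - 4) * (n - 3) :=
    Nat.mul_le_mul (by omega) (by omega)
  have hab' : a * (a + 1) ≤ b * (b + 1) := Nat.mul_le_mul hab (by omega)
  have hbc' : b * (b + 1) ≤ c * (c + 1) := Nat.mul_le_mul hbc (by omega)
  have hexp : (n - 4) * (n - 3) + 8 * n = n * (n + 1) + 12 := by
    obtain ⟨m, rfl⟩ : ∃ m, n = m + 4 := ⟨n - 4, by omega⟩
    simp only [Nat.add_sub_cancel]
    have : m + 4 - 3 = m + 1 := by omega
    rw [this]; ring
  by_contra hlt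
  -- turn divisions into products
  have h2 : a * (a + 1) + b * (b + 1) + c * (c + 1) = 2 * n + n * (n + 1) := by omega
  have hble : b * (b + 1) ≤ 2 * n + 4 * a + 4 := by omega
  have h3 : 3 * (a * (a + 1)) ≤ 2 * n + n * (n + 1) := by omega
  -- a(a+1)+b(b+1) ≥ 10n-12, so 2 b(b+1) ≥ 10n-12, so 10n-12 ≤ 4n+8a+8, so 3n ≤ 4a+10
  have key : 3 * n ≤ 4 * a + 10 := by omega
  nlinarith [h3, key, hn, Nat.mul_le_mul key key]
end

section
/- Let a, b, c, n be natural numbers with a ≤ b ≤ c < n and T_a + T_b + T_c = n + T_n. Suppose S is a finite set of integers with S ⊆ [a+1, n-1] and the sum of elements of S equal to T_c - n. Let S̄ = [a+1, n-1] \ S. Then the multiset union of [1, a] and S̄ ∩ [a+1, c] has total sum equal to the total sum of (S ∩ [c+1, n-1]) ∪ {n}. -/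
lemma gauss_two (m : ℕ) : 2 * (Finset.Icc (1:ℤ) (m:ℤ)).sum id = m * (m + 1) := by
  induction m with
  | zero => simp
  | succ k ih =>
    have hins : Finset.Icc (1:ℤ) ((k:ℤ)+1) = insert ((k:ℤ)+1) (Finset.Icc (1:ℤ) (k:ℤ)) := by
      ext x; simp [Finset.mem_Icc]; omega
    push_cast
    rw [hins, Finset.sum_insert (by simp [Finset.mem_Icc])]
    simp only [id_eq] at ih ⊢
    linear_combination ih

theorem first_weighing_balances (a b c n : ℕ) (hab : a ≤ b) (hbc : b ≤ c) (hcn : c < n)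
    (h : a * (a + 1) / 2 + b * (b + 1) / 2 + c * (c + 1) / 2 = n + n * (n + 1) / 2)
    (S : Finset ℤ) (hS : S ⊆ Finset.Icc ((a : ℤ) + 1) ((n : ℤ) - 1))
    (hsum : S.sum id = (c * (c + 1) / 2 : ℤ) - n) :
    ((Finset.Icc (1 : ℤ) (a : ℤ)).sum id +
        (((Finset.Icc ((a : ℤ) + 1) ((n : ℤ) - 1)) \ S ∩ Finset.Icc ((a : ℤ) + 1) (c : ℤ)).sum id)
      = ((S ∩ Finset.Icc ((c : ℤ) + 1) ((n : ℤ) - 1)).sum id) + n) := by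
  have hcn' : (c:ℤ) + 1 ≤ (n:ℤ) := by exact_mod_cast hcn
  have hac : (a:ℤ) ≤ (c:ℤ) := by exact_mod_cast le_trans hab hbc
  set A := S ∩ Finset.Icc ((a:ℤ)+1) (c:ℤ) with hA
  set B := S ∩ Finset.Icc ((c:ℤ)+1) ((n:ℤ)-1) with hB
  have hdisj : Disjoint A B := by
    rw [Finset.disjoint_left]
    intro x hx hx'
    simp only [hA, hB, Finset.mem_inter, Finset.mem_Icc] at hx hx'
    omega
  have hunion : A ∪ B = S := by
    ext x
    simp only [hA, hB, Finset.mem_union, Finset.mem_inter, Finset.mem_Icc]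
    constructor
    · tauto
    · intro hx
      have := hS hx
      simp only [Finset.mem_Icc] at this
      rcases le_or_gt x (c:ℤ) with hxc | hxc
      · exact Or.inl ⟨hx, by omega, hxc⟩
      · exact Or.inr ⟨hx, by omega, by omega⟩
  have hsplit : A.sum id + B.sum id = S.sum id := by
    rw [← Finset.sum_union hdisj, hunion]
  -- rewrite the sdiff-inter set
  have hset : (Finset.Icc ((a:ℤ)+1) ((n:ℤ)-1)) \ S ∩ Finset.Icc ((a:ℤ)+1) (c:ℤ)
      = Finset.Icc ((a:ℤ)+1) (c:ℤ) \ A := by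
    ext x
    simp only [hA, Finset.mem_inter, Finset.mem_sdiff, Finset.mem_Icc]
    constructor
    · rintro ⟨⟨h1, h2⟩, h3⟩; exact ⟨h3, by tauto⟩
    · rintro ⟨⟨h1, h2⟩, h3⟩
      refine ⟨⟨⟨h1, by omega⟩, ?_⟩, ⟨h1, h2⟩⟩
      intro hxS; exact h3 ⟨hxS, h1, h2⟩
  have hAsub : A ⊆ Finset.Icc ((a:ℤ)+1) (c:ℤ) := Finset.inter_subset_right
  have hsdiff : (Finset.Icc ((a:ℤ)+1) (c:ℤ) \ A).sum id
      = (Finset.Icc ((a:ℤ)+1) (c:ℤ)).sum id - A.sum id :=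
    Finset.sum_sdiff_eq_sub hAsub
  have hIcc : (Finset.Icc (1:ℤ) (a:ℤ)).sum id + (Finset.Icc ((a:ℤ)+1) (c:ℤ)).sum id
      = (Finset.Icc (1:ℤ) (c:ℤ)).sum id := by
    rw [← Finset.sum_union]
    · congr 1
      ext x; simp only [Finset.mem_union, Finset.mem_Icc]; omega
    · rw [Finset.disjoint_left]
      intro x hx hx'
      simp only [Finset.mem_Icc] at hx hx'
      omega
  have hg := gauss_two c
  rw [hset, hsdiff]
  have h2 : (Finset.Icc (1:ℤ) (a:ℤ)).sum id + ((Finset.Icc ((a:ℤ)+1) (c:ℤ)).sum id - A.sum id)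
      = (Finset.Icc (1:ℤ) (c:ℤ)).sum id - A.sum id := by omega
  rw [h2]
  generalize hgc : ((c:ℤ) * ((c:ℤ)+1)) = t at hg hsum
  omega
end

section
/- Let a, b, c, n be natural numbers with a ≤ b ≤ c < n and T_a + T_b + T_c = n + T_n. Suppose S ⊆ [a+1, n-1] with sum of S equal to T_c - n, and let S̄ = [a+1, n-1] \ S. Then the sum of [1, a] plus the sum of S ∩ [a+1, b] equals the sum of S̄ ∩ [b+1, c] plus the sum of S̄ ∩ [c+1, n-1] plus n. -/
open Finset

lemma gauss_ioc (m : ℕ) : 2 * ∑ x ∈ Finset.Ioc (0:ℤ) (m:ℤ), x = m * (m + 1) := by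
  induction m with
  | zero => simp
  | succ k ih =>
    have hins : Finset.Ioc (0:ℤ) ((k:ℤ)+1) = insert ((k:ℤ)+1) (Finset.Ioc (0:ℤ) (k:ℤ)) := by
      ext x; simp [Finset.mem_Ioc]; omega
    push_cast
    rw [hins, Finset.sum_insert (by simp [Finset.mem_Ioc])]
    push_cast at ih
    ring_nf
    ring_nf at ih
    linarith

theorem second_weighing_balances (a b c n : ℕ) (hab : a ≤ b) (hbc : b ≤ c) (hcn : c < n)
    (h : a * (a + 1) / 2 + b * (b + 1) / 2 + c * (c + 1) / 2 = n + n * (n + 1) / 2)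
    (S : Finset ℤ) (hS : S ⊆ Finset.Icc ((a : ℤ) + 1) ((n : ℤ) - 1))
    (hsum : S.sum id = (c * (c + 1) / 2 : ℤ) - n) :
    ((Finset.Icc (1 : ℤ) (a : ℤ)).sum id +
        ((S ∩ Finset.Icc ((a : ℤ) + 1) (b : ℤ)).sum id)
      = (((Finset.Icc ((a : ℤ) + 1) ((n : ℤ) - 1)) \ S ∩ Finset.Icc ((b : ℤ) + 1) (c : ℤ)).sum id)
        + (((Finset.Icc ((a : ℤ) + 1) ((n : ℤ) - 1)) \ S ∩ Finset.Icc ((c : ℤ) + 1) ((n : ℤ) - 1)).sum id)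
        + n) := by
  have hab' : (a:ℤ) ≤ b := by exact_mod_cast hab
  have hbc' : (b:ℤ) ≤ c := by exact_mod_cast hbc
  have hcn' : (c:ℤ) < n := by exact_mod_cast hcn
  -- arithmetic form of h
  obtain ⟨ka, hka⟩ := (Nat.even_mul_succ_self a)
  obtain ⟨kb, hkb⟩ := (Nat.even_mul_succ_self b)
  obtain ⟨kc, hkc⟩ := (Nat.even_mul_succ_self c)
  obtain ⟨kn, hkn⟩ := (Nat.even_mul_succ_self n)
  have h2n : a * (a+1) + b * (b+1) + c * (c+1) = 2 * n + n * (n+1) := by omega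
  have h2 : (a:ℤ) * (a+1) + (b:ℤ) * (b+1) + (c:ℤ) * (c+1) = 2*n + (n:ℤ)*(n+1) := by
    exact_mod_cast h2n
  -- the triangular number cast in hsum
  have hTc : (c * (c + 1) / 2 : ℤ) = (kc : ℤ) := by
    have : (c:ℤ) * (c+1) = 2 * kc := by exact_mod_cast (by omega : c * (c+1) = 2 * kc)
    omega
  have hTc2 : 2 * (c * (c + 1) / 2 : ℤ) = (c:ℤ) * (c+1) := by
    have : (c:ℤ) * (c+1) = 2 * kc := by exact_mod_cast (by omega : c * (c+1) = 2 * kc)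
    omega
  set I := Finset.Icc ((a : ℤ) + 1) ((n : ℤ) - 1) with hI
  set I1 := Finset.Icc ((a : ℤ) + 1) (b : ℤ) with hI1
  set I2 := Finset.Icc ((b : ℤ) + 1) (c : ℤ) with hI2
  set I3 := Finset.Icc ((c : ℤ) + 1) ((n : ℤ) - 1) with hI3
  -- split S's sum
  have hsplit : (S ∩ I1).sum id + (S ∩ I2).sum id + (S ∩ I3).sum id = S.sum id := by
    rw [← Finset.sum_union, ← Finset.sum_union]
    · congr 1
      ext x
      by_cases hx : x ∈ S
      · have hxI := hS hx
        simp only [hI, Finset.mem_Icc] at hxI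
        simp [hx, hI1, hI2, hI3, Finset.mem_Icc]
        omega
      · simp [hx]
    · rw [Finset.disjoint_left]
      intro x hx hx3
      simp only [Finset.mem_union, Finset.mem_inter, Finset.mem_Icc, hI1, hI2, hI3] at hx hx3
      omega
    · rw [Finset.disjoint_left]
      intro x hx hx2
      simp only [Finset.mem_inter, Finset.mem_Icc, hI1, hI2] at hx hx2
      omega
  -- complement sums
  have hcomp2 : (I \ S ∩ I2).sum id = I2.sum id - (S ∩ I2).sum id := by
    have heq : I \ S ∩ I2 = I2 \ (S ∩ I2) := by
      ext x
      by_cases hx : x ∈ S <;>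
        simp [hx, hI, hI2, Finset.mem_Icc, Finset.mem_sdiff] <;> omega
    rw [heq, Finset.sum_sdiff_eq_sub Finset.inter_subset_right]
  have hcomp3 : (I \ S ∩ I3).sum id = I3.sum id - (S ∩ I3).sum id := by
    have heq : I \ S ∩ I3 = I3 \ (S ∩ I3) := by
      ext x
      by_cases hx : x ∈ S <;>
        simp [hx, hI, hI3, Finset.mem_Icc, Finset.mem_sdiff] <;> omega
    rw [heq, Finset.sum_sdiff_eq_sub Finset.inter_subset_right]
  rw [hcomp2, hcomp3]
  -- Gauss sums
  have g0 : (Finset.Icc (1 : ℤ) (a : ℤ)).sum id = ∑ x ∈ Finset.Ioc (0:ℤ) (a:ℤ), x := by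
    apply Finset.sum_congr _ (fun _ _ => rfl)
    ext x; simp [Finset.mem_Icc, Finset.mem_Ioc]; omega
  have gsum : ∀ u v : ℕ, u ≤ v →
      (Finset.Icc ((u:ℤ)+1) (v:ℤ)).sum id =
        (∑ x ∈ Finset.Ioc (0:ℤ) (v:ℤ), x) - ∑ x ∈ Finset.Ioc (0:ℤ) (u:ℤ), x := by
    intro u v huv
    have h1 : Finset.Icc ((u:ℤ)+1) (v:ℤ) = Finset.Ioc (u:ℤ) (v:ℤ) := by
      ext x; simp [Finset.mem_Icc, Finset.mem_Ioc]
    simp only [id]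
    rw [h1, ← Finset.Ioc_union_Ioc_eq_Ioc (by positivity : (0:ℤ) ≤ (u:ℤ))
      (by exact_mod_cast huv : (u:ℤ) ≤ v), Finset.sum_union ?_]
    · ring
    · rw [Finset.disjoint_left]
      intro x hx hx'
      simp only [Finset.mem_Ioc] at hx hx'
      omega
  have hI2sum : I2.sum id = (∑ x ∈ Finset.Ioc (0:ℤ) (c:ℤ), x) - ∑ x ∈ Finset.Ioc (0:ℤ) (b:ℤ), x :=
    gsum b c hbc
  have hn1 : ((n:ℤ) - 1) = (((n-1 : ℕ)):ℤ) := by omega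
  have hI3sum : I3.sum id =
      (∑ x ∈ Finset.Ioc (0:ℤ) (((n-1:ℕ)):ℤ), x) - ∑ x ∈ Finset.Ioc (0:ℤ) (c:ℤ), x := by
    rw [hI3, hn1]
    exact gsum c (n-1) (by omega)
  have ga := gauss_ioc a
  have gb := gauss_ioc b
  have gc := gauss_ioc c
  have gn := gauss_ioc (n-1)
  have hn1' : ((n-1:ℕ):ℤ) = (n:ℤ) - 1 := by omega
  rw [hn1'] at gn
  have gn' : 2 * ∑ x ∈ Finset.Ioc (0:ℤ) ((n:ℤ)-1), x = ((n:ℤ)-1) * n := by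
    rw [gn]
    push_cast [Nat.sub_add_cancel (by omega : 1 ≤ n)]
    ring
  rw [g0, hI2sum, hI3sum, hn1']
  have hsum' : (S ∩ I1).sum id + (S ∩ I2).sum id + (S ∩ I3).sum id
      = (c * (c + 1) / 2 : ℤ) - n := by rw [hsplit, hsum]
  linarith
end

section
/- Let n, a, b, c be natural numbers with a ≤ b ≤ c ≤ n - 1 and T_a + T_b + T_c = n + T_n. Let A, B, C, D be pairwise disjoint finite sets of positive integers with A ∪ B ∪ C ∪ D = [1, n], |A| = a, |B| = b - a, |C| = n - 1 - c, |D| = 1 (cardinalities), and suppose 2·(sum of A) + (sum of B) = (sum of C) + 2·(sum of D). Then A = [1, a], B = [a+1, b], C = [c+1, n-1], and D = {n}. -/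
lemma sum_Icc_one_id (m : ℕ) : (Finset.Icc 1 m).sum id = m * (m + 1) / 2 := by
  induction m with
  | zero => simp
  | succ k ih =>
    rw [Finset.sum_Icc_succ_top (by omega : (1:ℕ) ≤ k + 1)]
    simp only [id] at *
    have hr : (k + 1) * (k + 1 + 1) = k * (k + 1) + 2 * (k + 1) := by ring
    omega

lemma key_min : ∀ (k : ℕ) (S : Finset ℕ), S.card = k → (∀ x ∈ S, 1 ≤ x) →
    (Finset.Icc 1 k).sum id ≤ S.sum id ∧
      (S.sum id ≤ (Finset.Icc 1 k).sum id → S = Finset.Icc 1 k) := by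
  intro k
  induction k with
  | zero =>
    intro S hc _
    have hS : S = ∅ := Finset.card_eq_zero.mp hc
    subst hS
    simp
  | succ k ih =>
    intro S hc hpos
    have hne : S.Nonempty := Finset.card_pos.mp (by omega)
    set m := S.max' hne with hmdef
    have hm : m ∈ S := S.max'_mem hne
    have hsub : S ⊆ Finset.Icc 1 m := fun x hx =>
      Finset.mem_Icc.mpr ⟨hpos x hx, S.le_max' x hx⟩
    have hmk : k + 1 ≤ m := by
      have hle := Finset.card_le_card hsub
      rw [hc, Nat.card_Icc] at hle
      omega
    have hcE : (S.erase m).card = k := by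
      rw [Finset.card_erase_of_mem hm, hc]; omega
    have hposE : ∀ x ∈ S.erase m, 1 ≤ x := fun x hx => hpos x (Finset.mem_of_mem_erase hx)
    obtain ⟨ih1, ih2⟩ := ih (S.erase m) hcE hposE
    have hsum : S.sum id = m + (S.erase m).sum id := by
      rw [← Finset.add_sum_erase S id hm]; simp
    have htop : (Finset.Icc 1 (k+1)).sum id = (Finset.Icc 1 k).sum id + (k+1) := by
      rw [Finset.sum_Icc_succ_top (by omega : (1:ℕ) ≤ k + 1)]; simp
    constructor
    · omega
    · intro hle
      have hm' : m = k + 1 := by omega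
      have hE : S.erase m = Finset.Icc 1 k := ih2 (by omega)
      have hins : S = insert m (S.erase m) := (Finset.insert_erase hm).symm
      rw [hins, hE, hm']
      ext x
      simp only [Finset.mem_insert, Finset.mem_Icc]
      omega

theorem extremal_uniqueness (n a b c : ℕ) (hab : a ≤ b) (hbc : b ≤ c) (hcn : c ≤ n - 1)
    (h : a * (a + 1) / 2 + b * (b + 1) / 2 + c * (c + 1) / 2 = n + n * (n + 1) / 2)
    (A B C D : Finset ℕ)
    (hAB : Disjoint A B) (hAC : Disjoint A C) (hAD : Disjoint A D)
    (hBC : Disjoint B C) (hBD : Disjoint B D) (hCD : Disjoint C D)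
    (hunion : A ∪ B ∪ C ∪ D = Finset.Icc 1 n)
    (hA : A.card = a) (hB : B.card = b - a) (hC : C.card = n - 1 - c) (hD : D.card = 1)
    (hbal : 2 * A.sum id + B.sum id = C.sum id + 2 * D.sum id) :
    A = Finset.Icc 1 a ∧ B = Finset.Icc (a + 1) b ∧ C = Finset.Icc (c + 1) (n - 1) ∧
      D = {n} := by
  -- basic disjointness of the two halves
  have hdAB_CD : Disjoint (A ∪ B) (C ∪ D) := by
    simp [Finset.disjoint_union_left, Finset.disjoint_union_right, hAC, hAD, hBC, hBD]
  have hUU : A ∪ B ∪ (C ∪ D) = Finset.Icc 1 n := by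
    rw [← hunion]; ac_rfl
  -- cardinalities
  have hcardAB : (A ∪ B).card = b := by
    rw [Finset.card_union_of_disjoint hAB, hA, hB]; omega
  have hcardU : (A ∪ B).card + (C ∪ D).card = n := by
    rw [← Finset.card_union_of_disjoint hdAB_CD, hUU, Nat.card_Icc]; omega
  have hbceq : b = c ∧ 1 ≤ n := by
    rw [hcardAB, Finset.card_union_of_disjoint hCD, hC, hD] at hcardU
    omega
  obtain ⟨hbc', hn1⟩ := hbceq
  -- subsets of Icc 1 n
  have hsubA : A ⊆ Finset.Icc 1 n := by
    rw [← hunion]; intro x hx; simp [hx]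
  have hsubAB : A ∪ B ⊆ Finset.Icc 1 n := by
    rw [← hunion]; intro x hx; simp at hx; simp [hx]
    rcases hx with h | h <;> simp [h]
  have hsubD : D ⊆ Finset.Icc 1 n := by
    rw [← hunion]; intro x hx; simp [hx]
  have hposU : ∀ x ∈ Finset.Icc 1 n, 1 ≤ x := fun x hx => (Finset.mem_Icc.mp hx).1
  obtain ⟨hAge, hAeq⟩ := key_min a A hA (fun x hx => hposU x (hsubA hx))
  obtain ⟨hABge, hABeq⟩ := key_min b (A ∪ B) hcardAB (fun x hx => hposU x (hsubAB hx))
  -- D is a singleton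
  obtain ⟨d, hDd⟩ := Finset.card_eq_one.mp hD
  have hdmem : d ∈ Finset.Icc 1 n := hsubD (by rw [hDd]; simp)
  have hdn : d ≤ n := (Finset.mem_Icc.mp hdmem).2
  have hDsum : D.sum id = d := by rw [hDd]; simp
  -- sums split
  have s1 : (A ∪ B).sum id = A.sum id + B.sum id := Finset.sum_union hAB
  have s2 : (C ∪ D).sum id = C.sum id + D.sum id := Finset.sum_union hCD
  have hsumpart : (A ∪ B).sum id + (C ∪ D).sum id = (Finset.Icc 1 n).sum id := by
    rw [← Finset.sum_union hdAB_CD, hUU]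
  -- convert h to sums
  have hTa := sum_Icc_one_id a
  have hTb := sum_Icc_one_id b
  have hTc := sum_Icc_one_id c
  have hTn := sum_Icc_one_id n
  have hT : (Finset.Icc 1 a).sum id + (Finset.Icc 1 b).sum id + (Finset.Icc 1 c).sum id
      = n + (Finset.Icc 1 n).sum id := by
    rw [hTa, hTb, hTc, hTn]; exact h
  have hTbc : (Finset.Icc 1 b).sum id = (Finset.Icc 1 c).sum id := by rw [hbc']
  -- equality forcing
  have hAsum : A.sum id = (Finset.Icc 1 a).sum id := by omega
  have hABsum : (A ∪ B).sum id = (Finset.Icc 1 b).sum id := by omega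
  have hdn' : d = n := by omega
  -- conclude set equalities
  have hAfin : A = Finset.Icc 1 a := hAeq (le_of_eq hAsum)
  have hABfin : A ∪ B = Finset.Icc 1 b := hABeq (le_of_eq hABsum)
  have hDfin : D = {n} := by rw [hDd, hdn']
  have hBfin : B = Finset.Icc (a + 1) b := by
    ext x
    constructor
    · intro hx
      have h1 : x ∈ Finset.Icc 1 b := hABfin ▸ Finset.mem_union_right A hx
      have h2 : x ∉ A := fun hx' => (Finset.disjoint_left.mp hAB hx') hx
      rw [hAfin] at h2
      simp only [Finset.mem_Icc] at *
      omega
    · intro hx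
      simp only [Finset.mem_Icc] at hx
      have h1 : x ∈ A ∪ B := by
        rw [hABfin]; simp only [Finset.mem_Icc]; omega
      rcases Finset.mem_union.mp h1 with hh | hh
      · exfalso; rw [hAfin] at hh; simp only [Finset.mem_Icc] at hh; omega
      · exact hh
  have hCfin : C = Finset.Icc (c + 1) (n - 1) := by
    ext x
    have hx_union : ∀ y, y ∈ A ∪ B ∪ C ∪ D ↔ y ∈ Finset.Icc 1 n := by
      intro y; rw [hunion]
    constructor
    · intro hx
      have hxI : x ∈ Finset.Icc 1 n := (hx_union x).mp (by simp [hx])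
      have hxAB : x ∉ A ∪ B := fun hh =>
        (Finset.disjoint_left.mp hdAB_CD hh) (Finset.mem_union_left D hx)
      have hxD : x ∉ D := fun hh => (Finset.disjoint_left.mp hCD hx) hh
      rw [hABfin] at hxAB
      rw [hDfin] at hxD
      simp only [Finset.mem_Icc, Finset.mem_singleton] at *
      omega
    · intro hx
      simp only [Finset.mem_Icc] at hx
      have hxI : x ∈ Finset.Icc 1 n := by simp only [Finset.mem_Icc]; omega
      have hmem := (hx_union x).mpr hxI
      simp only [Finset.mem_union] at hmem
      rcases hmem with ((hh | hh) | hh) | hh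
      · exfalso; rw [hAfin] at hh; simp only [Finset.mem_Icc] at hh; omega
      · exfalso; rw [hBfin] at hh; simp only [Finset.mem_Icc] at hh; omega
      · exact hh
      · exfalso; rw [hDfin] at hh; simp only [Finset.mem_singleton] at hh; omega
  exact ⟨hAfin, hBfin, hCfin, hDfin⟩
end
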